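/- arXiv:1005.1593 — 3 statements merged into one kernel-verified Lean document; each statement's English description precedes it below -/
import Mathlib

section
/- With the sequences S_i as in the paper, for any i ≠ j and any k, if the unique coordinate in which S_{i,k} differs from S_{i,k+1} equals the unique coordinate in which S_{j,k} differs from S_{j,k+1}, then H(S_{i,k}, S_{j,k}) = 1. -/
/-- Concatenation of a length-`b` prefix with a length-`n-b` suffix into a vector of
length `n` (assuming `b ≤ n`). -/
def concatVec (b n : ℕ) (hbn : b ≤ n) (x : Fin b → Bool) (y : Fin (n - b) → Bool) :
    Fin n → Bool :=
  fun j => if h : (j : ℕ) < b then x ⟨j, h⟩ else y ⟨(j : ℕ) - b, by omega⟩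

/-- Cyclic shift of a binary vector of length `m` by `t` positions to the left. -/
def cycShift (m t : ℕ) (y : Fin m → Bool) : Fin m → Bool :=
  fun j => y ⟨((j : ℕ) + t) % m, Nat.mod_lt _ j.pos⟩

/-- `b`-bit binary representation of a natural number `i`. -/
def binRep (b : ℕ) (i : ℕ) : Fin b → Bool :=
  fun j => i.testBit (j : ℕ)

/-- The sequences of the paper: `S i k` is the concatenation of the `b`-bit binary
representation of `i` with the `k`-th row of the Gray code `G` on `n - b` bits cyclically
shifted `i mod (n-b)` positions to the left. -/
def paperSeq (b n : ℕ) (hbn : b ≤ n) (G : Fin (2 ^ (n - b)) → (Fin (n - b) → Bool))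
    (i : Fin (2 ^ b)) (k : Fin (2 ^ (n - b))) : Fin n → Bool :=
  concatVec b n hbn (binRep b i) (cycShift (n - b) ((i : ℕ) % (n - b)) (G k))

/-- Lemma 2.3 of the paper: if two different sequences `S_i`, `S_j` flip the same
coordinate between rows `k` and `k+1`, then `H(S_{i,k}, S_{j,k}) = 1`. -/
theorem paperSeq_same_flip (b : ℕ) (hb : 1 ≤ b) (n : ℕ) (hn : n = 2 ^ (b - 1) + b)
    (hbn : b ≤ n)
    (G : Fin (2 ^ (n - b)) → (Fin (n - b) → Bool))
    (hGbij : Function.Bijective G)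
    (hGgray : ∀ k : Fin (2 ^ (n - b)), ∀ h : (k : ℕ) + 1 < 2 ^ (n - b),
      hammingDist (G k) (G ⟨(k : ℕ) + 1, h⟩) = 1) :
    ∀ i j : Fin (2 ^ b), i ≠ j → ∀ k : Fin (2 ^ (n - b)), ∀ h : (k : ℕ) + 1 < 2 ^ (n - b),
      (∃ c : Fin n,
        paperSeq b n hbn G i k c ≠ paperSeq b n hbn G i ⟨(k : ℕ) + 1, h⟩ c ∧
        paperSeq b n hbn G j k c ≠ paperSeq b n hbn G j ⟨(k : ℕ) + 1, h⟩ c) →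
      hammingDist (paperSeq b n hbn G i k) (paperSeq b n hbn G j k) = 1 := by
  intro i j hij k h hex
  obtain ⟨c, hci, hcj⟩ := hex
  have hm2 : n - b = 2 ^ (b - 1) := by omega
  have hm1 : 0 < n - b := by
    have : 0 < 2 ^ (b - 1) := Nat.pow_pos (by norm_num)
    omega
  -- Step 1: the flipped coordinate is in the suffix
  have hbc : b ≤ (c : ℕ) := by
    by_contra hlt
    push_neg at hlt
    apply hci
    simp only [paperSeq, concatVec, dif_pos hlt]
  have hnb : ¬ ((c : ℕ) < b) := not_lt.mpr hbc
  simp only [paperSeq, concatVec, cycShift, dif_neg hnb] at hci hcj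
  -- Step 2: unique flipped Gray coordinate
  have h1 := hGgray k h
  simp only [hammingDist] at h1
  rw [Finset.card_eq_one] at h1
  obtain ⟨p₀, hp₀⟩ := h1
  have key : ∀ p : Fin (n - b), G k p ≠ G ⟨(k : ℕ) + 1, h⟩ p → p = p₀ := by
    intro p hp
    have hmem : p ∈ ({p₀} : Finset (Fin (n - b))) := by
      rw [← hp₀]
      simp [hp]
    simpa using hmem
  have hpi := key _ hci
  have hpj := key _ hcj
  have heqmod : ((c : ℕ) - b + (i : ℕ) % (n - b)) % (n - b)
      = ((c : ℕ) - b + (j : ℕ) % (n - b)) % (n - b) :=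
    (congrArg Fin.val hpi).trans (congrArg Fin.val hpj).symm
  -- Step 3: i ≡ j mod (n-b)
  have hij' : (i : ℕ) % (n - b) = (j : ℕ) % (n - b) := by
    have h2 : (i : ℕ) % (n - b) ≡ (j : ℕ) % (n - b) [MOD n - b] :=
      Nat.ModEq.add_left_cancel' _ heqmod
    have h3 := h2
    unfold Nat.ModEq at h3
    simpa [Nat.mod_mod_of_dvd, Nat.mod_mod] using h3
  -- Step 4: quotients differ and are < 2
  have hdmi := Nat.div_add_mod (i : ℕ) (n - b)
  have hdmj := Nat.div_add_mod (j : ℕ) (n - b)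
  have hpow : 2 ^ b = 2 * (n - b) := by
    rw [hm2, ← pow_succ']
    congr 1
    omega
  have hqi : (i : ℕ) / (n - b) < 2 := by
    rw [Nat.div_lt_iff_lt_mul hm1]
    have := i.isLt
    omega
  have hqj : (j : ℕ) / (n - b) < 2 := by
    rw [Nat.div_lt_iff_lt_mul hm1]
    have := j.isLt
    omega
  have hvne : (i : ℕ) ≠ (j : ℕ) := fun hv => hij (Fin.ext hv)
  have hqne : (i : ℕ) / (n - b) ≠ (j : ℕ) / (n - b) := by
    intro hq
    apply hvne
    conv_lhs => rw [← hdmi]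
    rw [hq, hij', hdmj]
  -- bit descriptions
  have hmlt_i : (i : ℕ) % (n - b) < 2 ^ (b - 1) := hm2 ▸ Nat.mod_lt _ hm1
  have hmlt_j : (j : ℕ) % (n - b) < 2 ^ (b - 1) := hm2 ▸ Nat.mod_lt _ hm1
  have hrep_i : 2 ^ (b - 1) * ((i : ℕ) / (n - b)) + (i : ℕ) % (n - b) = (i : ℕ) := by
    rw [← hm2]; exact hdmi
  have hrep_j : 2 ^ (b - 1) * ((j : ℕ) / (n - b)) + (j : ℕ) % (n - b) = (j : ℕ) := by
    rw [← hm2]; exact hdmj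
  have hbit_i : ∀ t : ℕ, (i : ℕ).testBit t =
      if t < b - 1 then ((i : ℕ) % (n - b)).testBit t
      else ((i : ℕ) / (n - b)).testBit (t - (b - 1)) := by
    intro t
    conv_lhs => rw [← hrep_i]
    exact Nat.testBit_two_pow_mul_add _ hmlt_i t
  have hbit_j : ∀ t : ℕ, (j : ℕ).testBit t =
      if t < b - 1 then ((j : ℕ) % (n - b)).testBit t
      else ((j : ℕ) / (n - b)).testBit (t - (b - 1)) := by
    intro t
    conv_lhs => rw [← hrep_j]
    exact Nat.testBit_two_pow_mul_add _ hmlt_j t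
  have hb1 : b - 1 < n := by omega
  -- characterize the differing coordinates
  have hset : ∀ d : Fin n,
      paperSeq b n hbn G i k d ≠ paperSeq b n hbn G j k d ↔ d = ⟨b - 1, hb1⟩ := by
    intro d
    by_cases hd : (d : ℕ) < b
    · simp only [paperSeq, concatVec, dif_pos hd, binRep]
      rw [hbit_i, hbit_j]
      constructor
      · intro hne'
        by_cases ht : (d : ℕ) < b - 1
        · rw [if_pos ht, if_pos ht, hij'] at hne'
          exact absurd rfl hne'
        · exact Fin.ext (show (d : ℕ) = b - 1 by omega)
      · intro hd'
        have hdv : (d : ℕ) = b - 1 := by rw [hd']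
        have ht : ¬ ((d : ℕ) < b - 1) := by omega
        rw [if_neg ht, if_neg ht, hdv, Nat.sub_self]
        have hcase : ((i : ℕ) / (n - b) = 0 ∧ (j : ℕ) / (n - b) = 1) ∨
            ((i : ℕ) / (n - b) = 1 ∧ (j : ℕ) / (n - b) = 0) := by
          have h1 : (i : ℕ) / (n - b) = 0 ∨ (i : ℕ) / (n - b) = 1 :=
            Nat.le_one_iff_eq_zero_or_eq_one.mp (Nat.lt_succ_iff.mp hqi)
          have h2 : (j : ℕ) / (n - b) = 0 ∨ (j : ℕ) / (n - b) = 1 :=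
            Nat.le_one_iff_eq_zero_or_eq_one.mp (Nat.lt_succ_iff.mp hqj)
          rcases h1 with h1 | h1 <;> rcases h2 with h2 | h2
          · exact absurd (h1.trans h2.symm) hqne
          · exact Or.inl ⟨h1, h2⟩
          · exact Or.inr ⟨h1, h2⟩
          · exact absurd (h1.trans h2.symm) hqne
        rcases hcase with ⟨h1, h2⟩ | ⟨h1, h2⟩ <;> rw [h1, h2] <;> decide
    · simp only [paperSeq, concatVec, cycShift, dif_neg hd, hij']
      constructor
      · intro hx
        exact absurd rfl hx
      · intro hd'
        exfalso
        have : (d : ℕ) = b - 1 := by rw [hd']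
        omega
  simp only [hammingDist]
  rw [Finset.card_eq_one]
  refine ⟨⟨b - 1, hb1⟩, ?_⟩
  ext d
  simp [hset d]
end

section
/- Fix j ∈ {1,...,n} and ṽ ∈ {0,1}^n with ṽ_j = 1; let ṽ_ĵ agree with ṽ except (ṽ_ĵ)_j = 0, and set s = |{i ≠ j : ṽ_i = 1}|. For a > 0 and λ_1, λ_2 ∈ ℝ, define w̄ = a(ṽ_ĵ − ½·1_ĵ) + (λ_2 − λ_1) e_j and c̄ = −a(ṽ_ĵ − ½·1_ĵ)·ṽ + λ_1, where 1_ĵ is the all-ones vector with 0 in position j and e_j the j-th standard basis vector. Then for every v ∈ {0,1}^n: w̄·v + c̄ = −(a/2)|{i ≠ j : ṽ_i ≠ v_i}| + (λ_2 − λ_1)v_j + λ_1, and consequently as a → ∞: 1 + exp(w̄·v + c̄) → 1 for v ∉ {ṽ, ṽ_ĵ}, 1 + exp(w̄·ṽ_ĵ + c̄) → 1 + e^{λ_1}, and 1 + exp(w̄·ṽ + c̄) → 1 + e^{λ_2}. -/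
open Real Filter Topology

/-- Inner product of a real weight vector with a binary vector regarded as a 0/1 vector. -/
def dotB {n : ℕ} (w : Fin n → ℝ) (v : Fin n → Bool) : ℝ :=
  ∑ i, w i * (if v i then 1 else 0)

/-- The weights `w̄ = a(ṽ_ĵ − ½·1_ĵ) + (λ₂ − λ₁)e_j`. -/
noncomputable def wBar {n : ℕ} (j : Fin n) (vt : Fin n → Bool) (a lam1 lam2 : ℝ) : Fin n → ℝ :=
  fun i =>
    a * ((if Function.update vt j false i then 1 else 0) -
          (1 / 2) * (if i = j then 0 else 1)) +
    (lam2 - lam1) * (if i = j then 1 else 0)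

/-- The offset `c̄ = −a(ṽ_ĵ − ½·1_ĵ)·ṽ + λ₁`. -/
noncomputable def cBar {n : ℕ} (j : Fin n) (vt : Fin n → Bool) (a lam1 : ℝ) : ℝ :=
  -(∑ i, a * ((if Function.update vt j false i then 1 else 0) -
      (1 / 2) * (if i = j then 0 else 1)) * (if vt i then 1 else 0)) + lam1

/-- Item 3 of the proof of Theorem 1: the value of `w̄·v + c̄` and the limits, as
`a → ∞`, of `1 + exp(w̄·v + c̄)` at `v ∉ {ṽ, ṽ_ĵ}`, at `ṽ_ĵ` and at `ṽ`. -/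
theorem rbm_weight_limits (n : ℕ) (j : Fin n) (vt : Fin n → Bool) (hvt : vt j = true)
    (lam1 lam2 : ℝ) :
    (∀ a : ℝ, ∀ v : Fin n → Bool,
      dotB (wBar j vt a lam1 lam2) v + cBar j vt a lam1 =
        -(a / 2) * (Finset.univ.filter fun i => i ≠ j ∧ vt i ≠ v i).card +
          (lam2 - lam1) * (if v j then 1 else 0) + lam1) ∧
    (∀ v : Fin n → Bool, v ≠ vt → v ≠ Function.update vt j false →
      Tendsto (fun a : ℝ => 1 + exp (dotB (wBar j vt a lam1 lam2) v + cBar j vt a lam1))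
        atTop (𝓝 1)) ∧
    Tendsto (fun a : ℝ =>
        1 + exp (dotB (wBar j vt a lam1 lam2) (Function.update vt j false) +
          cBar j vt a lam1)) atTop (𝓝 (1 + exp lam1)) ∧
    Tendsto (fun a : ℝ =>
        1 + exp (dotB (wBar j vt a lam1 lam2) vt + cBar j vt a lam1))
      atTop (𝓝 (1 + exp lam2)) := by
  have key : ∀ a : ℝ, ∀ v : Fin n → Bool,
      dotB (wBar j vt a lam1 lam2) v + cBar j vt a lam1 =
        -(a / 2) * (Finset.univ.filter fun i => i ≠ j ∧ vt i ≠ v i).card +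
          (lam2 - lam1) * (if v j then 1 else 0) + lam1 := by
    intro a v
    have hcard : ((Finset.univ.filter fun i => i ≠ j ∧ vt i ≠ v i).card : ℝ)
        = ∑ i, (if i ≠ j ∧ vt i ≠ v i then (1:ℝ) else 0) := by
      rw [Finset.card_filter]
      push_cast
      exact Finset.sum_congr rfl fun i _ => by split <;> simp
    have hterm : ∀ i : Fin n,
        (a * ((if Function.update vt j false i then 1 else 0) -
            (1 / 2) * (if i = j then 0 else 1)) +
          (lam2 - lam1) * (if i = j then 1 else 0)) * (if v i then (1:ℝ) else 0)
        - a * ((if Function.update vt j false i then 1 else 0) -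
            (1 / 2) * (if i = j then 0 else 1)) * (if vt i then 1 else 0)
        = -(a/2) * (if i ≠ j ∧ vt i ≠ v i then 1 else 0)
          + (if i = j then (lam2 - lam1) * (if v i then (1:ℝ) else 0) else 0) := by
      intro i
      rcases eq_or_ne i j with h | h
      · subst h; simp [Function.update_self, hvt]
      · rw [Function.update_of_ne h]
        cases hv : v i <;> cases hw : vt i <;> simp [h, hv, hw] <;> ring
    have expand : dotB (wBar j vt a lam1 lam2) v + cBar j vt a lam1
        = ∑ i, (-(a/2) * (if i ≠ j ∧ vt i ≠ v i then (1:ℝ) else 0)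
            + (if i = j then (lam2 - lam1) * (if v i then (1:ℝ) else 0) else 0)) + lam1 := by
      unfold dotB wBar cBar
      rw [← Finset.sum_congr rfl (fun i _ => hterm i), Finset.sum_sub_distrib]
      ring
    rw [expand, Finset.sum_add_distrib, Finset.sum_ite_eq' Finset.univ j
        (fun i => (lam2 - lam1) * (if v i then (1:ℝ) else 0))]
    simp only [Finset.mem_univ, if_true]
    rw [hcard, Finset.mul_sum]
  refine ⟨key, ?_, ?_, ?_⟩
  · intro v hv1 hv2
    -- card ≥ 1
    obtain ⟨i, hij, hne⟩ : ∃ i, i ≠ j ∧ vt i ≠ v i := by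
      by_contra h
      push_neg at h
      rcases hvj : v j with _ | _
      · apply hv2
        funext i
        rcases eq_or_ne i j with rfl | hij
        · simp [Function.update_self, hvj]
        · rw [Function.update_of_ne hij]; exact ((h i hij).symm)
      · apply hv1
        funext i
        rcases eq_or_ne i j with rfl | hij
        · rw [hvj, hvt]
        · exact (h i hij).symm
    set c : ℕ := (Finset.univ.filter fun i => i ≠ j ∧ vt i ≠ v i).card with hc
    have hcpos : 0 < c := Finset.card_pos.mpr ⟨i, by simp [hij, hne]⟩
    have hcr : (0:ℝ) < c := by exact_mod_cast hcpos
    have h1 : Tendsto (fun a : ℝ => -(a/2) * c + ((lam2 - lam1) * (if v j then 1 else 0) + lam1))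
        atTop atBot := by
      refine tendsto_atBot_add_const_right _ _ ?_
      exact (Tendsto.const_mul_atTop_of_neg (by linarith : -((c:ℝ)/2) < 0) tendsto_id).congr
        (fun a => by simp only [id_eq]; ring)
    have h2 : Tendsto (fun a : ℝ => exp (dotB (wBar j vt a lam1 lam2) v + cBar j vt a lam1))
        atTop (𝓝 0) := by
      have := tendsto_exp_atBot.comp h1
      refine this.congr (fun a => ?_)
      simp only [Function.comp]
      rw [key a v]; ring_nf; rfl
    have := (tendsto_const_nhds : Tendsto (fun _ : ℝ => (1:ℝ)) atTop (𝓝 1)).add h2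
    simpa using this
  · have hzero : (Finset.univ.filter fun i => i ≠ j ∧ vt i ≠ Function.update vt j false i).card = 0 := by
      rw [Finset.card_eq_zero]
      refine Finset.filter_eq_empty_iff.mpr fun i _ => ?_
      rintro ⟨hij, hne⟩
      exact hne (by rw [Function.update_of_ne hij])
    have : ∀ a : ℝ, dotB (wBar j vt a lam1 lam2) (Function.update vt j false) +
        cBar j vt a lam1 = lam1 := by
      intro a
      rw [key a _, hzero]
      simp [Function.update_self]
    simp only [this]
    exact tendsto_const_nhds
  · have hzero : (Finset.univ.filter fun i => i ≠ j ∧ vt i ≠ vt i).card = 0 := by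
      simp
    have : ∀ a : ℝ, dotB (wBar j vt a lam1 lam2) vt + cBar j vt a lam1 = lam2 := by
      intro a
      rw [key a _, hzero]
      simp [hvt]
    simp only [this]
    exact tendsto_const_nhds
end

section
/- Any probability distribution on {0,1}^n lies in the closure of the set of marginal visible distributions of Restricted Boltzmann Machines with 2^{n-1} − 1 hidden units, where the RBM visible marginal is p(v) ∝ exp(B·v) ∏_{t=1}^{2^{n-1}-1} (1 + exp(w_t·v + c_t)) with parameters B, w_t ∈ ℝ^n and c_t ∈ ℝ. -/
open Real

/-- The visible marginal of an RBM with `n` visible and `m` hidden units: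
`p(v) ∝ exp(B·v) ∏_t (1 + exp(w_t·v + c_t))`. -/
noncomputable def rbmMarginal (n m : ℕ) (B : Fin n → ℝ) (w : Fin m → Fin n → ℝ)
    (c : Fin m → ℝ) : (Fin n → Bool) → ℝ :=
  fun v => (exp (dotB B v) * ∏ t, (1 + exp (dotB (w t) v + c t))) /
    ∑ v', exp (dotB B v') * ∏ t, (1 + exp (dotB (w t) v' + c t))

namespace RBMAux

open Filter Topology Finset

noncomputable section

variable {n : ℕ}

/-- `0/1` indicator of a Boolean. -/
def bR (x : Bool) : ℝ := if x then 1 else 0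

/-- Number of ones of `v` away from coordinate `i₀` (as a real number). -/
def sOf (i₀ : Fin n) (v : Fin n → Bool) : ℝ := ∑ i ∈ univ.erase i₀, bR (v i)

/-- Hamming distance between `u` and `v` away from coordinate `i₀`. -/
def dN (i₀ : Fin n) (u v : Fin n → Bool) : ℕ :=
  ((univ.erase i₀).filter (fun i => ¬ v i = u i)).card

/-- `v` with coordinate `i₀` set to `false`. -/
def preV (i₀ : Fin n) (v : Fin n → Bool) : Fin n → Bool :=
  fun i => if i = i₀ then false else v i

/-- `u` with coordinate `i₀` set to `true`. -/
def flipV (i₀ : Fin n) (u : Fin n → Bool) : Fin n → Bool :=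
  fun i => if i = i₀ then true else u i

/-- The visible bias vector at stage `k`. -/
def Bk (i₀ : Fin n) (b : ℝ) (k : ℕ) : Fin n → ℝ :=
  fun i => if i = i₀ then b else -(k : ℝ)

/-- The weight vector of a hidden unit with prefix `u` at stage `k`. -/
def Wk (i₀ : Fin n) (βv : ℝ) (u : Fin n → Bool) (k : ℕ) : Fin n → ℝ :=
  fun i => if i = i₀ then βv else (k : ℝ) ^ 2 * (2 * bR (u i) - 1)

/-- The bias of a hidden unit with prefix `u` at stage `k`. -/
def Ck (i₀ : Fin n) (dv : ℝ) (u : Fin n → Bool) (k : ℕ) : ℝ :=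
  -(k : ℝ) ^ 2 * sOf i₀ u + (k : ℝ) * sOf i₀ u + dv

lemma card_U (i₀ : Fin n) :
    Fintype.card {u : Fin n → Bool // u i₀ = false ∧ u ≠ fun _ => false}
      = 2 ^ (n - 1) - 1 := by
  have e1 : {u : Fin n → Bool // u i₀ = false} ≃ ({i : Fin n // i ≠ i₀} → Bool) :=
    { toFun := fun u j => u.1 j.1
      invFun := fun f => ⟨fun i => if h : i = i₀ then false else f ⟨i, h⟩, by simp⟩
      left_inv := fun u => Subtype.ext (funext fun i => by
        by_cases h : i = i₀
        · simp [h, u.2]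
        · simp [h])
      right_inv := fun f => funext fun j => by simp [j.2] }
  have hA : Fintype.card {u : Fin n → Bool // u i₀ = false} = 2 ^ (n - 1) := by
    rw [Fintype.card_congr e1, Fintype.card_fun]
    congr 1
    · simp [Fintype.card_subtype_compl, Fintype.card_subtype_eq]
  have e2 : {u : Fin n → Bool // u i₀ = false ∧ u ≠ fun _ => false} ≃
      {x : {u : Fin n → Bool // u i₀ = false} // ¬ (x = ⟨fun _ => false, rfl⟩)} :=
    { toFun := fun u => ⟨⟨u.1, u.2.1⟩, by simp [Subtype.ext_iff]; exact u.2.2⟩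
      invFun := fun x => ⟨x.1.1, x.1.2, by simpa [Subtype.ext_iff] using x.2⟩
      left_inv := fun u => rfl
      right_inv := fun x => rfl }
  rw [Fintype.card_congr e2, Fintype.card_subtype_compl, Fintype.card_subtype_eq, hA]

lemma dot_split (i₀ : Fin n) (w : Fin n → ℝ) (v : Fin n → Bool) :
    dotB w v = w i₀ * bR (v i₀) + ∑ i ∈ univ.erase i₀, w i * bR (v i) := by
  rw [dotB]
  exact (Finset.add_sum_erase _ _ (mem_univ i₀)).symm

lemma dot_Bk (i₀ : Fin n) (b : ℝ) (k : ℕ) (v : Fin n → Bool) :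
    dotB (Bk i₀ b k) v = b * bR (v i₀) - (k : ℝ) * sOf i₀ v := by
  rw [dot_split i₀]
  have h1 : ∑ i ∈ univ.erase i₀, Bk i₀ b k i * bR (v i)
      = ∑ i ∈ univ.erase i₀, -(k : ℝ) * bR (v i) := by
    refine Finset.sum_congr rfl fun i hi => ?_
    rw [Bk, if_neg (Finset.mem_erase.1 hi).1]
  rw [h1, ← Finset.mul_sum, Bk, if_pos rfl, sOf]
  ring

lemma dot_Wk (i₀ : Fin n) (βv dv : ℝ) (u : Fin n → Bool) (k : ℕ) (v : Fin n → Bool) :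
    dotB (Wk i₀ βv u k) v + Ck i₀ dv u k
      = βv * bR (v i₀) + dv + (k : ℝ) * sOf i₀ u - (k : ℝ) ^ 2 * (dN i₀ u v : ℝ) := by
  rw [dot_split i₀]
  have h1 : ∑ i ∈ univ.erase i₀, Wk i₀ βv u k i * bR (v i)
      = (k : ℝ) ^ 2 * ∑ i ∈ univ.erase i₀, (2 * bR (u i) - 1) * bR (v i) := by
    rw [Finset.mul_sum]
    refine Finset.sum_congr rfl fun i hi => ?_
    rw [Wk, if_neg (Finset.mem_erase.1 hi).1]; ring
  have h2 : ∑ i ∈ univ.erase i₀, (2 * bR (u i) - 1) * bR (v i)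
      = sOf i₀ u - (dN i₀ u v : ℝ) := by
    rw [sOf, dN, Finset.card_filter]
    push_cast
    rw [← Finset.sum_sub_distrib]
    refine Finset.sum_congr rfl fun i _ => ?_
    cases hu : u i <;> cases hv : v i <;> simp [bR] <;> ring
  rw [h1, h2, Wk, if_pos rfl, Ck]
  ring

lemma sOf_eq_zero (i₀ : Fin n) (v : Fin n → Bool) (h : preV i₀ v = fun _ => false) :
    sOf i₀ v = 0 := by
  rw [sOf]
  refine Finset.sum_eq_zero fun i hi => ?_
  have hi' : i ≠ i₀ := (Finset.mem_erase.1 hi).1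
  have : v i = false := by
    have := congrFun h i
    simpa [preV, hi'] using this
  simp [this, bR]

lemma sOf_congr (i₀ : Fin n) (u v : Fin n → Bool) (h : preV i₀ v = u) :
    sOf i₀ v = sOf i₀ u := by
  refine Finset.sum_congr rfl fun i hi => ?_
  have hi' : i ≠ i₀ := (Finset.mem_erase.1 hi).1
  have := congrFun h i
  simp only [preV, if_neg hi'] at this
  rw [this]

lemma sOf_ge_one (i₀ : Fin n) (u : Fin n → Bool) (h0 : u i₀ = false)
    (hne : u ≠ fun _ => false) : 1 ≤ sOf i₀ u := by
  have : ∃ i, u i = true := by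
    by_contra hc
    push_neg at hc
    exact hne (funext fun i => by simpa using hc i)
  obtain ⟨i, hi⟩ := this
  have hii : i ≠ i₀ := fun h' => by rw [h', h0] at hi; exact Bool.false_ne_true hi
  have hmem : i ∈ univ.erase i₀ := Finset.mem_erase.2 ⟨hii, mem_univ i⟩
  have hle : bR (u i) ≤ sOf i₀ u :=
    Finset.single_le_sum (f := fun j => bR (u j))
      (fun j _ => by simp only [bR]; positivity) hmem
  rw [hi] at hle
  simpa [bR] using hle

lemma dN_eq_zero (i₀ : Fin n) (u v : Fin n → Bool) (h0 : u i₀ = false)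
    (h : preV i₀ v = u) : dN i₀ u v = 0 := by
  rw [dN, Finset.card_eq_zero, Finset.filter_eq_empty_iff]
  intro i hi
  have hi' : i ≠ i₀ := (Finset.mem_erase.1 hi).1
  have := congrFun h i
  simp only [preV, if_neg hi'] at this
  simp [this]

lemma dN_ge_one (i₀ : Fin n) (u v : Fin n → Bool) (h0 : u i₀ = false)
    (h : preV i₀ v ≠ u) : 1 ≤ (dN i₀ u v : ℝ) := by
  have : dN i₀ u v ≠ 0 := by
    intro hz
    rw [dN, Finset.card_eq_zero, Finset.filter_eq_empty_iff] at hz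
    refine h (funext fun i => ?_)
    by_cases hi : i = i₀
    · rw [preV]; simp [hi, h0]
    · have := hz (Finset.mem_erase.2 ⟨hi, mem_univ i⟩)
      simp only [not_not] at this
      simp [preV, hi, this]
  have h1 : 1 ≤ dN i₀ u v := Nat.one_le_iff_ne_zero.2 this
  exact_mod_cast h1

lemma aux_atBot (C A D : ℝ) (hD : 1 ≤ D) :
    Tendsto (fun k : ℕ => C + (k : ℝ) * A - (k : ℝ) ^ 2 * D) atTop atBot := by
  have hg : Tendsto (fun k : ℕ => C - (k : ℝ)) atTop atBot := by
    have : Tendsto (fun k : ℕ => -(k : ℝ)) atTop atBot :=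
      tendsto_neg_atTop_atBot.comp tendsto_natCast_atTop_atTop
    simpa [sub_eq_add_neg] using tendsto_atBot_add_const_left atTop C this
  refine tendsto_atBot_mono' atTop ?_ hg
  filter_upwards [eventually_ge_atTop (Nat.ceil (A + 1))] with k hk
  have hk' : A + 1 ≤ (k : ℝ) := by
    calc A + 1 ≤ (Nat.ceil (A + 1) : ℝ) := Nat.le_ceil _
    _ ≤ (k : ℝ) := by exact_mod_cast hk
  have h0 : (0:ℝ) ≤ (k:ℝ) := by positivity
  nlinarith [sq_nonneg ((k:ℝ))]

lemma tendsto_factor_one (C A D : ℝ) (hD : 1 ≤ D) :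
    Tendsto (fun k : ℕ => 1 + exp (C + (k : ℝ) * A - (k : ℝ) ^ 2 * D)) atTop (𝓝 1) := by
  have := (Real.tendsto_exp_atBot.comp (aux_atBot C A D hD))
  simpa using (tendsto_const_nhds (x := (1:ℝ)) (f := atTop)).add this

lemma tendsto_exp_neg_lin (s : ℝ) (hs : 1 ≤ s) :
    Tendsto (fun k : ℕ => exp (-(k : ℝ) * s)) atTop (𝓝 0) := by
  apply Real.tendsto_exp_atBot.comp
  refine tendsto_atBot_mono' atTop ?_
    (tendsto_neg_atTop_atBot.comp (tendsto_natCast_atTop_atTop (R := ℝ)))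
  · filter_upwards with k
    have h0 : (0:ℝ) ≤ (k:ℝ) := by positivity
    show -(k:ℝ) * s ≤ -(k:ℝ)
    nlinarith

lemma tendsto_main_factor (C s : ℝ) (hs : 1 ≤ s) :
    Tendsto (fun k : ℕ => exp (-(k : ℝ) * s) * (1 + exp (C + (k : ℝ) * s)))
      atTop (𝓝 (exp C)) := by
  have heq : ∀ k : ℕ, exp (-(k : ℝ) * s) * (1 + exp (C + (k : ℝ) * s))
      = exp (-(k : ℝ) * s) + exp C := by
    intro k
    rw [mul_add, mul_one, ← Real.exp_add]
    ring_nf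
  simp only [heq]
  simpa using (tendsto_exp_neg_lin s hs).add (tendsto_const_nhds (x := exp C))

lemma main_tendsto {m : ℕ} (i₀ : Fin n) (uF : Fin m → (Fin n → Bool))
    (h0 : ∀ t, uF t i₀ = false) (hne : ∀ t, uF t ≠ fun _ => false)
    (hinj : Function.Injective uF)
    (hsurj : ∀ x : Fin n → Bool, x i₀ = false → x ≠ (fun _ => false) → ∃ t, uF t = x)
    (b : ℝ) (β d : (Fin n → Bool) → ℝ) (v : Fin n → Bool) :
    Tendsto (fun k : ℕ => exp (dotB (Bk i₀ b k) v) *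
        ∏ t, (1 + exp (dotB (Wk i₀ (β (uF t)) (uF t) k) v + Ck i₀ (d (uF t)) (uF t) k)))
      atTop (𝓝 (exp (b * bR (v i₀)) *
        (if preV i₀ v = (fun _ => false) then 1
         else exp (β (preV i₀ v) * bR (v i₀) + d (preV i₀ v))))) := by
  have hrw : (fun k : ℕ => exp (dotB (Bk i₀ b k) v) *
        ∏ t, (1 + exp (dotB (Wk i₀ (β (uF t)) (uF t) k) v + Ck i₀ (d (uF t)) (uF t) k)))
      = fun k : ℕ => exp (b * bR (v i₀)) * (exp (-(k : ℝ) * sOf i₀ v) *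
        ∏ t, (1 + exp ((β (uF t) * bR (v i₀) + d (uF t)) + (k : ℝ) * sOf i₀ (uF t)
          - (k : ℝ) ^ 2 * (dN i₀ (uF t) v : ℝ)))) := by
    funext k
    have h1 : ∀ t : Fin m, dotB (Wk i₀ (β (uF t)) (uF t) k) v + Ck i₀ (d (uF t)) (uF t) k
        = (β (uF t) * bR (v i₀) + d (uF t)) + (k : ℝ) * sOf i₀ (uF t)
          - (k : ℝ) ^ 2 * (dN i₀ (uF t) v : ℝ) := by
      intro t
      rw [dot_Wk]
    simp only [h1, dot_Bk]
    rw [show b * bR (v i₀) - (k : ℝ) * sOf i₀ v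
        = b * bR (v i₀) + -(k : ℝ) * sOf i₀ v by ring, Real.exp_add, mul_assoc]
  rw [hrw]
  by_cases h : preV i₀ v = fun _ => false
  · rw [if_pos h]
    have hs0 : sOf i₀ v = 0 := sOf_eq_zero _ _ h
    simp only [hs0, mul_zero, neg_zero, Real.exp_zero, one_mul]
    have hprod : Tendsto (fun k : ℕ => ∏ t, (1 + exp ((β (uF t) * bR (v i₀) + d (uF t))
        + (k : ℝ) * sOf i₀ (uF t) - (k : ℝ) ^ 2 * (dN i₀ (uF t) v : ℝ))))
        atTop (𝓝 (∏ _t : Fin m, (1 : ℝ))) := by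
      refine tendsto_finset_prod _ fun t _ => tendsto_factor_one _ _ _ ?_
      refine dN_ge_one i₀ (uF t) v (h0 t) ?_
      rw [h]
      exact fun hh => hne t hh.symm
    have := hprod.const_mul (exp (b * bR (v i₀)))
    simpa using this
  · rw [if_neg h]
    obtain ⟨s, hsu⟩ := hsurj (preV i₀ v) (by simp [preV]) h
    have hsv : sOf i₀ v = sOf i₀ (uF s) := sOf_congr i₀ _ v hsu.symm
    have hdn : dN i₀ (uF s) v = 0 := dN_eq_zero i₀ _ v (h0 s) hsu.symm
    have hs1 : 1 ≤ sOf i₀ (uF s) := sOf_ge_one i₀ _ (h0 s) (hne s)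
    have hrw2 : (fun k : ℕ => exp (b * bR (v i₀)) * (exp (-(k : ℝ) * sOf i₀ v) *
        ∏ t, (1 + exp ((β (uF t) * bR (v i₀) + d (uF t)) + (k : ℝ) * sOf i₀ (uF t)
          - (k : ℝ) ^ 2 * (dN i₀ (uF t) v : ℝ)))))
        = fun k : ℕ => exp (b * bR (v i₀)) *
          ((exp (-(k : ℝ) * sOf i₀ (uF s)) *
            (1 + exp ((β (uF s) * bR (v i₀) + d (uF s)) + (k : ℝ) * sOf i₀ (uF s)))) *
           ∏ t ∈ univ.erase s, (1 + exp ((β (uF t) * bR (v i₀) + d (uF t))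
            + (k : ℝ) * sOf i₀ (uF t) - (k : ℝ) ^ 2 * (dN i₀ (uF t) v : ℝ)))) := by
      funext k
      rw [← Finset.mul_prod_erase univ _ (mem_univ s), hsv, hdn]
      simp only [Nat.cast_zero, mul_zero, sub_zero, mul_assoc]
    rw [hrw2]
    have T1 : Tendsto (fun k : ℕ => exp (-(k : ℝ) * sOf i₀ (uF s)) *
        (1 + exp ((β (uF s) * bR (v i₀) + d (uF s)) + (k : ℝ) * sOf i₀ (uF s))))
        atTop (𝓝 (exp (β (uF s) * bR (v i₀) + d (uF s)))) :=
      tendsto_main_factor _ _ hs1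
    have T2 : Tendsto (fun k : ℕ => ∏ t ∈ univ.erase s,
        (1 + exp ((β (uF t) * bR (v i₀) + d (uF t)) + (k : ℝ) * sOf i₀ (uF t)
          - (k : ℝ) ^ 2 * (dN i₀ (uF t) v : ℝ))))
        atTop (𝓝 (∏ _t ∈ univ.erase s, (1 : ℝ))) := by
      refine tendsto_finset_prod _ fun t ht => tendsto_factor_one _ _ _ ?_
      refine dN_ge_one i₀ (uF t) v (h0 t) ?_
      rw [← hsu]
      intro hh
      exact (Finset.mem_erase.1 ht).1 (hinj hh.symm)
    have := (T1.mul T2).const_mul (exp (b * bR (v i₀)))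
    simpa [← hsu] using this

/-- The target limit (unnormalized weight in the limit). -/
def LFun (i₀ : Fin n) (p : (Fin n → Bool) → ℝ) (v : Fin n → Bool) : ℝ :=
  exp ((log (p (flipV i₀ fun _ => false)) - log (p fun _ => false)) * bR (v i₀)) *
    (if preV i₀ v = (fun _ => false) then 1
     else exp ((log (p (flipV i₀ (preV i₀ v))) - log (p (preV i₀ v))
        - (log (p (flipV i₀ fun _ => false)) - log (p fun _ => false))) * bR (v i₀)
      + (log (p (preV i₀ v)) - log (p fun _ => false))))

lemma LFun_eq (i₀ : Fin n) (p : (Fin n → Bool) → ℝ) (hp : ∀ v, 0 < p v)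
    (v : Fin n → Bool) : LFun i₀ p v = p v / p (fun _ => false) := by
  by_cases h : preV i₀ v = (fun _ => false)
  · rw [LFun, if_pos h, mul_one]
    cases hvi : v i₀
    · have hv : v = (fun _ => false) := funext fun i => by
        by_cases hi : i = i₀
        · rw [hi]; exact hvi
        · have := congrFun h i; simpa [preV, hi] using this
      rw [hv]
      simp [bR, div_self (ne_of_gt (hp _))]
    · have hv : v = flipV i₀ (fun _ => false) := funext fun i => by
        by_cases hi : i = i₀
        · simp [flipV, hi, hvi]
        · have := congrFun h i; simp only [preV, if_neg hi] at this
          simp [flipV, hi, this]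
      simp only [bR, if_true, mul_one]
      rw [Real.exp_sub, Real.exp_log (hp _), Real.exp_log (hp _), ← hv]
  · rw [LFun, if_neg h]
    cases hvi : v i₀
    · have hv : v = preV i₀ v := funext fun i => by
        by_cases hi : i = i₀
        · rw [hi, preV]; simp [hvi]
        · simp [preV, hi]
      simp only [bR, Bool.false_eq_true, if_false, mul_zero, Real.exp_zero, one_mul,
        zero_add]
      rw [Real.exp_sub, Real.exp_log (hp _), Real.exp_log (hp _), ← hv]
    · have hv : v = flipV i₀ (preV i₀ v) := funext fun i => by
        by_cases hi : i = i₀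
        · simp [flipV, hi, hvi]
        · simp [flipV, preV, hi]
      simp only [bR, if_true, mul_one]
      rw [← Real.exp_add]
      have harg : log (p (flipV i₀ fun _ => false)) - log (p fun _ => false)
          + (log (p (flipV i₀ (preV i₀ v))) - log (p (preV i₀ v))
            - (log (p (flipV i₀ fun _ => false)) - log (p fun _ => false))
            + (log (p (preV i₀ v)) - log (p fun _ => false)))
          = log (p (flipV i₀ (preV i₀ v))) - log (p fun _ => false) := by ring
      rw [harg, Real.exp_sub, Real.exp_log (hp _), Real.exp_log (hp _), ← hv]

lemma pos_case (n : ℕ) (hn : 1 ≤ n)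
    (p : (Fin n → Bool) → ℝ) (hp : ∀ v, 0 < p v) (hsum : ∑ v, p v = 1) :
    p ∈ closure {q : (Fin n → Bool) → ℝ |
      ∃ (B : Fin n → ℝ) (w : Fin (2 ^ (n - 1) - 1) → Fin n → ℝ)
        (c : Fin (2 ^ (n - 1) - 1) → ℝ), q = rbmMarginal n (2 ^ (n - 1) - 1) B w c} := by
  have hn' : 0 < n := hn
  set i₀ : Fin n := ⟨0, hn'⟩ with hi₀
  let e : Fin (2 ^ (n - 1) - 1) ≃ {u : Fin n → Bool // u i₀ = false ∧ u ≠ fun _ => false} :=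
    (Fintype.equivFinOfCardEq (card_U i₀)).symm
  let uF : Fin (2 ^ (n - 1) - 1) → Fin n → Bool := fun t => (e t).1
  have h0 : ∀ t, uF t i₀ = false := fun t => (e t).2.1
  have hne : ∀ t, uF t ≠ fun _ => false := fun t => (e t).2.2
  have hinj : Function.Injective uF := fun a b hab => e.injective (Subtype.ext hab)
  have hsurj : ∀ x : Fin n → Bool, x i₀ = false → x ≠ (fun _ => false) → ∃ t, uF t = x := by
    intro x hx0 hxne
    refine ⟨e.symm ⟨x, hx0, hxne⟩, ?_⟩
    show (e (e.symm ⟨x, hx0, hxne⟩)).1 = x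
    rw [Equiv.apply_symm_apply]
  set b : ℝ := log (p (flipV i₀ fun _ => false)) - log (p fun _ => false) with hb
  set β : (Fin n → Bool) → ℝ := fun u => log (p (flipV i₀ u)) - log (p u) - b with hβ
  set d : (Fin n → Bool) → ℝ := fun u => log (p u) - log (p fun _ => false) with hd
  have hnum : ∀ v : Fin n → Bool, Tendsto (fun k : ℕ => exp (dotB (Bk i₀ b k) v) *
      ∏ t, (1 + exp (dotB (Wk i₀ (β (uF t)) (uF t) k) v + Ck i₀ (d (uF t)) (uF t) k)))
      atTop (𝓝 (LFun i₀ p v)) := by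
    intro v
    exact main_tendsto i₀ uF h0 hne hinj hsurj b β d v
  have hden : Tendsto (fun k : ℕ => ∑ v' : Fin n → Bool, exp (dotB (Bk i₀ b k) v') *
      ∏ t, (1 + exp (dotB (Wk i₀ (β (uF t)) (uF t) k) v' + Ck i₀ (d (uF t)) (uF t) k)))
      atTop (𝓝 (∑ v' : Fin n → Bool, LFun i₀ p v')) :=
    tendsto_finset_sum _ fun v' _ => hnum v'
  have hsumL : ∑ v' : Fin n → Bool, LFun i₀ p v' = 1 / p (fun _ => false) := by
    rw [Finset.sum_congr rfl fun v' _ => LFun_eq i₀ p hp v', ← Finset.sum_div, hsum]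
  have hne0 : (∑ v' : Fin n → Bool, LFun i₀ p v') ≠ 0 := by
    rw [hsumL]
    exact one_div_ne_zero (ne_of_gt (hp _))
  have hTT : Tendsto (fun k : ℕ => rbmMarginal n (2 ^ (n - 1) - 1) (Bk i₀ b k)
      (fun t => Wk i₀ (β (uF t)) (uF t) k) (fun t => Ck i₀ (d (uF t)) (uF t) k))
      atTop (𝓝 p) := by
    rw [tendsto_pi_nhds]
    intro v
    have hT := (hnum v).div hden hne0
    have hval : LFun i₀ p v / (∑ v' : Fin n → Bool, LFun i₀ p v') = p v := by
      rw [LFun_eq i₀ p hp v, hsumL]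
      field_simp
      rw [mul_div_assoc, div_self (ne_of_gt (hp _)), mul_one]
    rw [← hval]
    exact hT
  exact mem_closure_of_tendsto hTT (Filter.Eventually.of_forall fun k =>
    ⟨Bk i₀ b k, fun t => Wk i₀ (β (uF t)) (uF t) k, fun t => Ck i₀ (d (uF t)) (uF t) k, rfl⟩)

end

end RBMAux

/-- Corollary 1 of the paper. -/
theorem rbm_universal_approximation (n : ℕ) (hn : 1 ≤ n)
    (p : (Fin n → Bool) → ℝ) (hp : ∀ v, 0 ≤ p v) (hsum : ∑ v, p v = 1) :
    p ∈ closure {q : (Fin n → Bool) → ℝ |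
      ∃ (B : Fin n → ℝ) (w : Fin (2 ^ (n - 1) - 1) → Fin n → ℝ)
        (c : Fin (2 ^ (n - 1) - 1) → ℝ), q = rbmMarginal n (2 ^ (n - 1) - 1) B w c} := by
  classical
  open Filter Topology in
  -- approximate `p` by strictly positive distributions
  set S := {q : (Fin n → Bool) → ℝ |
      ∃ (B : Fin n → ℝ) (w : Fin (2 ^ (n - 1) - 1) → Fin n → ℝ)
        (c : Fin (2 ^ (n - 1) - 1) → ℝ), q = rbmMarginal n (2 ^ (n - 1) - 1) B w c} with hS
  have hcard : (Finset.univ : Finset (Fin n → Bool)).card = 2 ^ n := by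
    simp [Finset.card_univ, Fintype.card_fun]
  set pj : ℕ → (Fin n → Bool) → ℝ :=
    fun j v => (p v + 1 / (j + 1)) / (1 + (2 ^ n) * (1 / (j + 1))) with hpj
  have hden_pos : ∀ j : ℕ, (0:ℝ) < 1 + (2 ^ n) * (1 / (j + 1)) := by
    intro j
    have : (0:ℝ) < 1 / (j + 1) := by positivity
    positivity
  have hmem : ∀ j : ℕ, pj j ∈ closure S := by
    intro j
    refine RBMAux.pos_case n hn (pj j) (fun v => ?_) ?_
    · have h1 : (0:ℝ) < 1 / (j + 1) := by positivity
      exact div_pos (by linarith [hp v]) (hden_pos j)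
    · rw [hpj]
      simp only
      rw [← Finset.sum_div, Finset.sum_add_distrib, hsum, Finset.sum_const, hcard]
      rw [nsmul_eq_mul]
      push_cast
      field_simp
  have htend : Tendsto (fun j : ℕ => pj j) atTop (𝓝 p) := by
    rw [tendsto_pi_nhds]
    intro v
    have h0 : Tendsto (fun j : ℕ => 1 / ((j:ℝ) + 1)) atTop (𝓝 0) :=
      tendsto_one_div_add_atTop_nhds_zero_nat
    have hnumt : Tendsto (fun j : ℕ => p v + 1 / ((j:ℝ) + 1)) atTop (𝓝 (p v)) := by
      simpa using (tendsto_const_nhds (x := p v) (f := atTop)).add h0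
    have hdent : Tendsto (fun j : ℕ => 1 + (2 ^ n : ℝ) * (1 / ((j:ℝ) + 1)))
        atTop (𝓝 1) := by
      have := h0.const_mul (2 ^ n : ℝ)
      simpa using (tendsto_const_nhds (x := (1:ℝ)) (f := atTop)).add this
    have hfin := hnumt.div hdent one_ne_zero
    rw [div_one] at hfin
    exact hfin
  have : p ∈ closure (closure S) :=
    mem_closure_of_tendsto htend (Filter.Eventually.of_forall hmem)
  rwa [closure_closure] at this
end
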